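/- Let X and Z be independent random vectors in ℝⁿ with Z standard Gaussian, and let a, b > 0. If Y = a·X + b·Z, then for the map S(y) = E[X | Y = y], the score of the density p_Y of Y satisfies ∇ log p_Y(y) = (a·S(y) − y)/b² whenever X has a density. -/

import Mathlib

/-!
Differentiating `pY y = ∫ pX x * c * exp (-‖y - a • x‖² / (2b²)) dx` under the integral sign
gives `∇ pY y = b⁻² ∫ pX x * gauss y x • (a • x - y) dx = b⁻² (a • pY y • S y - pY y • y)`,
and dividing by `pY y` gives the score. Dominated differentiation applies because
`t * exp (-t² / (2b²)) ≤ b` bounds the gradient of the kernel, uniformly in `y`, by `|c| / b`,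
so the derivative of the integrand is dominated by a multiple of `|pX|`.
-/

open Real MeasureTheory InnerProductSpace

theorem mul_exp_neg_sq_div_le {b : ℝ} (hb : 0 < b) (t : ℝ) :
    t * exp (-t ^ 2 / (2 * b ^ 2)) ≤ b := by
  have hpoly : t ≤ b * (t ^ 2 / (2 * b ^ 2) + 1) := by
    have : b * (t ^ 2 / (2 * b ^ 2) + 1) - t = ((t - b) ^ 2 + b ^ 2) / (2 * b) := by
      field_simp; ring
    linarith [show 0 ≤ ((t - b) ^ 2 + b ^ 2) / (2 * b) by positivity]
  rw [neg_div, exp_neg, ← div_eq_mul_inv, div_le_iff₀ (exp_pos _)]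
  exact hpoly.trans (mul_le_mul_of_nonneg_left (add_one_le_exp _) hb.le)

section Gradient

variable {E : Type*} [NormedAddCommGroup E] [InnerProductSpace ℝ E] [CompleteSpace E]

theorem HasGradientAt.log {f : E → ℝ} {f' x : E} (hf : HasGradientAt f f' x) (hx : f x ≠ 0) :
    HasGradientAt (fun y ↦ Real.log (f y)) ((f x)⁻¹ • f') x := by
  rw [hasGradientAt_iff_hasFDerivAt, map_smul]
  exact hf.hasFDerivAt.log hx

theorem HasGradientAt.const_mul {f : E → ℝ} {f' x : E} (hf : HasGradientAt f f' x) (c : ℝ) :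
    HasGradientAt (fun y ↦ c * f y) (c • f') x := by
  rw [hasGradientAt_iff_hasFDerivAt, map_smul]
  exact hf.hasFDerivAt.const_mul c

theorem hasGradientAt_integral_of_dominated_of_gradient_le {α : Type*} [MeasurableSpace α]
    {μ : Measure α} {F : E → α → ℝ} {F' : E → α → E} {y₀ : E} {s : Set E} {bound : α → ℝ}
    (hs : s ∈ nhds y₀) (hF_meas : ∀ᶠ y in nhds y₀, AEStronglyMeasurable (F y) μ)
    (hF_int : Integrable (F y₀) μ) (hF'_meas : AEStronglyMeasurable (F' y₀) μ)
    (h_bound : ∀ᵐ z ∂μ, ∀ y ∈ s, ‖F' y z‖ ≤ bound z) (bound_integrable : Integrable bound μ)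
    (h_diff : ∀ᵐ z ∂μ, ∀ y ∈ s, HasGradientAt (F · z) (F' y z) y) :
    HasGradientAt (fun y ↦ ∫ z, F y z ∂μ) (∫ z, F' y₀ z ∂μ) y₀ := by
  rw [hasGradientAt_iff_hasFDerivAt, ← LinearIsometryEquiv.coe_toLinearIsometry,
    ← LinearIsometry.integral_comp_comm]
  refine hasFDerivAt_integral_of_dominated_of_fderiv_le hs hF_meas hF_int
    ((toDual ℝ E).continuous.comp_aestronglyMeasurable hF'_meas) ?_ bound_integrable h_diff
  filter_upwards [h_bound] with z hz y hy
  simpa using hz y hy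

end Gradient

section GaussianKernel

variable {E : Type*} [NormedAddCommGroup E] [InnerProductSpace ℝ E]

noncomputable def gaussianKernel (c a b : ℝ) (y x : E) : ℝ :=
  c * exp (-‖y - a • x‖ ^ 2 / (2 * b ^ 2))

variable {c a b : ℝ}

theorem abs_gaussianKernel_le (y x : E) : |gaussianKernel c a b y x| ≤ |c| := by
  rw [gaussianKernel, abs_mul, abs_of_pos (exp_pos _)]
  refine mul_le_of_le_one_right (abs_nonneg c) (exp_le_one_iff.2 ?_)
  rw [neg_div]
  exact neg_nonpos.2 (by positivity)

theorem abs_gaussianKernel_mul_norm_sub_le (hb : 0 < b) (y x : E) :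
    |gaussianKernel c a b y x| * ‖y - a • x‖ ≤ |c| * b := by
  rw [gaussianKernel, abs_mul, abs_of_pos (exp_pos _), mul_assoc, mul_comm (exp _)]
  exact mul_le_mul_of_nonneg_left (mul_exp_neg_sq_div_le hb _) (abs_nonneg c)

theorem norm_mul_gaussianKernel_smul_sub_le (hb : 0 < b) (r : ℝ) (y x : E) :
    ‖(r * gaussianKernel c a b y x) • (a • x - y)‖ ≤ |c| * b * |r| := by
  rw [norm_smul, norm_mul, Real.norm_eq_abs, Real.norm_eq_abs, norm_sub_rev, mul_assoc,
    mul_comm _ |r|]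
  exact mul_le_mul_of_nonneg_left (abs_gaussianKernel_mul_norm_sub_le hb y x) (abs_nonneg r)

theorem continuous_gaussianKernel (y : E) : Continuous (gaussianKernel c a b y) := by
  unfold gaussianKernel
  fun_prop

theorem hasGradientAt_gaussianKernel [CompleteSpace E] (x y : E) :
    HasGradientAt (gaussianKernel c a b · x)
      ((b ^ 2)⁻¹ • gaussianKernel c a b y x • (a • x - y)) y := by
  have hsq : HasFDerivAt (fun z : E ↦ ‖z - a • x‖ ^ 2) (2 • innerSL ℝ (y - a • x)) y := by
    simpa using ((hasFDerivAt_id y).sub_const (a • x)).norm_sq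
  have hfun : (gaussianKernel c a b · x) = fun z ↦ c * exp (-(2 * b ^ 2)⁻¹ * ‖z - a • x‖ ^ 2) := by
    funext z
    rw [gaussianKernel, neg_div, div_eq_inv_mul, neg_mul]
  rw [hasGradientAt_iff_hasFDerivAt, hfun]
  refine ((hsq.const_mul _).exp.const_mul c).congr_fderiv ?_
  ext w
  have hy : gaussianKernel c a b y x = c * exp (-(2 * b ^ 2)⁻¹ * ‖y - a • x‖ ^ 2) := congrFun hfun y
  simp only [hy, smul_apply, innerSL_apply_apply, toDual_apply_apply, smul_eq_mul,
    inner_sub_left, real_inner_smul_left, nsmul_eq_mul]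
  ring

variable [MeasurableSpace E] [OpensMeasurableSpace E]
  {μ : Measure E} {p : E → ℝ}

theorem MeasureTheory.Integrable.mul_gaussianKernel (hp : Integrable p μ) (c a b : ℝ) (y : E) :
    Integrable (fun x ↦ p x * gaussianKernel c a b y x) μ :=
  hp.mul_bdd (continuous_gaussianKernel y).aestronglyMeasurable
    (.of_forall fun x ↦ abs_gaussianKernel_le y x)

variable [SecondCountableTopology E]

theorem MeasureTheory.Integrable.mul_gaussianKernel_smul_sub (hp : Integrable p μ) (hb : 0 < b)
    (y : E) :
    Integrable (fun x ↦ (p x * gaussianKernel c a b y x) • (a • x - y)) μ := by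
  refine (hp.norm.const_mul (|c| * b)).mono' ?_ (.of_forall fun x ↦ ?_)
  · exact (hp.mul_gaussianKernel c a b y).aestronglyMeasurable.smul
      (by fun_prop : Continuous fun x : E ↦ a • x - y).aestronglyMeasurable
  · exact norm_mul_gaussianKernel_smul_sub_le hb (p x) y x

theorem integral_mul_gaussianKernel_smul_sub [CompleteSpace E] (hp : Integrable p μ)
    (hb : 0 < b) (y : E) :
    ∫ x, (p x * gaussianKernel c a b y x) • (a • x - y) ∂μ =
      a • ∫ x, (p x * gaussianKernel c a b y x) • x ∂μ -
        (∫ x, p x * gaussianKernel c a b y x ∂μ) • y := by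
  have hsplit : a • ∫ x, (p x * gaussianKernel c a b y x) • x ∂μ =
      ∫ x, (p x * gaussianKernel c a b y x) • (a • x - y) ∂μ +
        (∫ x, p x * gaussianKernel c a b y x ∂μ) • y := by
    rw [← integral_smul, ← integral_smul_const,
      ← integral_add (hp.mul_gaussianKernel_smul_sub hb y)
        ((hp.mul_gaussianKernel c a b y).smul_const y)]
    congr 1 with x
    rw [← smul_add, sub_add_cancel, smul_comm]
  rw [hsplit, add_sub_cancel_right]

theorem hasGradientAt_integral_mul_gaussianKernel [CompleteSpace E] (hp : Integrable p μ)
    (hb : 0 < b) (y : E) :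
    HasGradientAt (fun y ↦ ∫ x, p x * gaussianKernel c a b y x ∂μ)
      ((b ^ 2)⁻¹ • ∫ x, (p x * gaussianKernel c a b y x) • (a • x - y) ∂μ) y := by
  rw [← integral_smul]
  refine hasGradientAt_integral_of_dominated_of_gradient_le
    (F' := fun y x ↦ (b ^ 2)⁻¹ • (p x * gaussianKernel c a b y x) • (a • x - y))
    (bound := fun x ↦ (b ^ 2)⁻¹ * (|c| * b * |p x|)) Filter.univ_mem
    (.of_forall fun y ↦ (hp.mul_gaussianKernel c a b y).aestronglyMeasurable)
    (hp.mul_gaussianKernel c a b y)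
    ((hp.mul_gaussianKernel_smul_sub hb y).aestronglyMeasurable.const_smul _)
    (.of_forall fun x y _ ↦ ?_) ((hp.abs.const_mul _).const_mul _) (.of_forall fun x y _ ↦ ?_)
  · rw [norm_smul, norm_inv, norm_pow, Real.norm_eq_abs, abs_of_pos hb]
    exact mul_le_mul_of_nonneg_left (norm_mul_gaussianKernel_smul_sub_le hb _ y x) (by positivity)
  · convert (hasGradientAt_gaussianKernel x y).const_mul (p x) using 1
    rw [smul_smul, smul_smul, smul_smul, mul_left_comm, mul_assoc]

end GaussianKernel

theorem tweedie_formula_general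
    {n : ℕ} (a b : ℝ) (hb : 0 < b)
    (pX : EuclideanSpace ℝ (Fin n) → ℝ)
    (hpXint : ∫ x : EuclideanSpace ℝ (Fin n), pX x = 1) :
    let gauss : EuclideanSpace ℝ (Fin n) → EuclideanSpace ℝ (Fin n) → ℝ :=
      fun y x => (2 * π * b ^ 2) ^ (-(n : ℝ) / 2) *
        Real.exp (-‖y - a • x‖ ^ 2 / (2 * b ^ 2))
    let pY : EuclideanSpace ℝ (Fin n) → ℝ := fun y => ∫ x, pX x * gauss y x
    let S : EuclideanSpace ℝ (Fin n) → EuclideanSpace ℝ (Fin n) :=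
      fun y => (pY y)⁻¹ • ∫ x, (pX x * gauss y x) • x
    ∀ y, pY y ≠ 0 →
      gradient (fun y' => Real.log (pY y')) y = (b ^ 2)⁻¹ • (a • S y - y) := by
  intro gauss pY S y hy
  have hp : Integrable pX := .of_integral_ne_zero (by rw [hpXint]; exact one_ne_zero)
  have hscore : HasGradientAt (fun y' ↦ Real.log (pY y'))
      ((pY y)⁻¹ • (b ^ 2)⁻¹ • (a • (∫ x, (pX x * gauss y x) • x) - pY y • y)) y := by
    have := (hasGradientAt_integral_mul_gaussianKernel (c := (2 * π * b ^ 2) ^ (-(n : ℝ) / 2))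
      (a := a) hp hb y).log hy
    rw [integral_mul_gaussianKernel_smul_sub hp hb] at this
    exact this
  rw [hscore.gradient, smul_comm]
  congr 1
  rw [smul_sub, smul_smul (pY y)⁻¹ (pY y), inv_mul_cancel₀ hy, one_smul, smul_comm]

/-- Tweedie's formula.  Let `X` have density `pX` on `ℝⁿ`, let `Z` be an
independent standard Gaussian and `Y = a·X + b·Z` with `a, b > 0`.  Then `Y`
has density `pY(y) = ∫ pX(x)·N(y; a x, b² I) dx`, the posterior mean
(denoiser) is `S(y) = E[X | Y = y] = (∫ pX(x)·N(y; a x, b² I)·x dx)/pY(y)`,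
and the score of `pY` satisfies `∇ log pY(y) = (a·S(y) − y)/b²`. -/
theorem tweedie_formula
    {n : ℕ} (a b : ℝ) (ha : 0 < a) (hb : 0 < b)
    (pX : EuclideanSpace ℝ (Fin n) → ℝ)
    (hpXmeas : Measurable pX) (hpXnn : ∀ x, 0 ≤ pX x)
    (hpXint : ∫ x : EuclideanSpace ℝ (Fin n), pX x = 1) :
    let gauss : EuclideanSpace ℝ (Fin n) → EuclideanSpace ℝ (Fin n) → ℝ :=
      fun y x => (2 * π * b ^ 2) ^ (-(n : ℝ) / 2) *
        Real.exp (-‖y - a • x‖ ^ 2 / (2 * b ^ 2))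
    let pY : EuclideanSpace ℝ (Fin n) → ℝ := fun y => ∫ x, pX x * gauss y x
    let S : EuclideanSpace ℝ (Fin n) → EuclideanSpace ℝ (Fin n) :=
      fun y => (pY y)⁻¹ • ∫ x, (pX x * gauss y x) • x
    ∀ y, pY y ≠ 0 →
      gradient (fun y' => Real.log (pY y')) y = (b ^ 2)⁻¹ • (a • S y - y) :=
  tweedie_formula_general a b hb pX hpXint
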